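/- The Gomory–Hu-tree-based greedy algorithm (run the tree greedy on H and output the union of the corresponding cuts in G) yields a cut of weight at most (2 − 2/q) times the optimum of Single-to-Single on arbitrary graphs. -/

import Mathlib

open scoped Classical

/-- The set of edges of `G` with exactly one endpoint in `S`. -/
noncomputable def boundary {V : Type*} [Fintype V] [DecidableEq V]
    (G : SimpleGraph V) (S : Set V) : Finset (Sym2 V) :=
  Finset.univ.filter (fun e => e ∈ G.edgeSet ∧ ∃ u ∈ S, ∃ v ∈ Sᶜ, e = s(u, v))

/-!
If two terminals are separated in `H - F`, the tree path between them uses some `e ∈ F` and they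
lie on different sides of `e`, so the cut `U e` of `G` already separates them.

For the ratio fix a feasible `(t', C)`, let `V_x` be the component of the terminal `x` in `G - C`
and `b x` the weight of its boundary, which lies in `C`. Each edge of `C` is on at most two of
these boundaries, so `∑ b ≤ 2 w(C)`. The boundary of `V_x` separates `x` from every other
terminal `y`, so by the Gomory–Hu property each tree path from `x` to `y` carries an edge of
weight at most `min (b x) (b y)`. Cutting such an edge and recursing on both sides yields tree
edges separating all terminals (exactly `q - 1` of them, as `k` deleted edges of a connected graph
separate at most `k + 1` vertices) of total weight at most `∑ b - b m` for every terminal `m`,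
hence at most `(1 - 1/q) ∑ b ≤ (2 - 2/q) w(C)`. The greedy `F` is no heavier, and
`w(⋃ U e) ≤ wH(F)`.
-/

namespace Finset

variable {ι α M : Type*} [DecidableEq α]

theorem sum_union_le_add [AddCommMonoid M] [PartialOrder M] [IsOrderedAddMonoid M]
    {s t : Finset α} {f : α → M} (hf : ∀ x ∈ s ∩ t, 0 ≤ f x) :
    ∑ x ∈ s ∪ t, f x ≤ ∑ x ∈ s, f x + ∑ x ∈ t, f x := by
  rw [← sum_union_inter]
  exact le_add_of_nonneg_right (sum_nonneg hf)

theorem sum_biUnion_le_sum_sum [AddCommMonoid M] [PartialOrder M] [IsOrderedAddMonoid M]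
    (s : Finset ι) (t : ι → Finset α) {f : α → M} (hf : ∀ x, 0 ≤ f x) :
    ∑ x ∈ s.biUnion t, f x ≤ ∑ i ∈ s, ∑ x ∈ t i, f x := by
  induction s using Finset.induction_on with
  | empty => simp
  | insert i s hi ih =>
    rw [biUnion_insert, sum_insert hi]
    exact (sum_union_le_add fun x _ => hf x).trans (add_le_add_right ih _)

theorem sum_sum_le_mul_sum {s : Finset ι} {t : ι → Finset α} {C : Finset α} {f : α → ℝ} (n : ℕ)
    (hf : ∀ x ∈ C, 0 ≤ f x) (ht : ∀ i ∈ s, t i ⊆ C) (hn : ∀ x ∈ C, #{i ∈ s | x ∈ t i} ≤ n) :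
    ∑ i ∈ s, ∑ x ∈ t i, f x ≤ n * ∑ x ∈ C, f x := by
  calc ∑ i ∈ s, ∑ x ∈ t i, f x = ∑ i ∈ s, ∑ x ∈ C, if x ∈ t i then f x else 0 :=
        sum_congr rfl fun i hi => by rw [sum_ite_mem, inter_eq_right.mpr (ht i hi)]
    _ = ∑ x ∈ C, #{i ∈ s | x ∈ t i} * f x := by
        rw [sum_comm]
        refine sum_congr rfl fun x _ => ?_
        rw [← sum_filter, sum_const, nsmul_eq_mul]
    _ ≤ ∑ x ∈ C, n * f x :=
        sum_le_sum fun x hx => mul_le_mul_of_nonneg_right (by exact_mod_cast hn x hx) (hf x hx)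
    _ = n * ∑ x ∈ C, f x := (mul_sum _ _ _).symm

end Finset

section boundary

open Finset

variable {V : Type*} [Fintype V] [DecidableEq V] {G : SimpleGraph V} {S : Set V}

theorem mk_mem_boundary_iff {u v : V} :
    s(u, v) ∈ boundary G S ↔ G.Adj u v ∧ (u ∈ S ∧ v ∉ S ∨ v ∈ S ∧ u ∉ S) := by
  simp only [boundary, mem_filter, mem_univ, true_and, SimpleGraph.mem_edgeSet, Sym2.eq_iff]
  aesop

theorem boundary_subset_edgeSet : ↑(boundary G S) ⊆ G.edgeSet :=
  fun _ he => (mem_filter.mp he).2.1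

theorem not_reachable_deleteEdges_boundary {u v : V} (hu : u ∈ S) (hv : v ∉ S) :
    ¬(G.deleteEdges ↑(boundary G S)).Reachable u v := by
  rintro ⟨p⟩
  obtain ⟨d, -, hd, hd'⟩ := p.exists_boundary_dart S hu hv
  obtain ⟨hadj, hnot⟩ := SimpleGraph.deleteEdges_adj.mp d.adj
  exact hnot (mk_mem_boundary_iff.mpr ⟨hadj, Or.inl ⟨hd, hd'⟩⟩)

theorem boundary_reachable_subset (C : Finset (Sym2 V)) (u : V) :
    boundary G {v | (G.deleteEdges ↑C).Reachable u v} ⊆ C := by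
  intro e he
  induction e using Sym2.ind with | _ x y => ?_
  by_contra hC
  have hxy : (G.deleteEdges ↑C).Adj x y := SimpleGraph.deleteEdges_adj.mpr
    ⟨(mk_mem_boundary_iff.mp he).1, hC⟩
  rcases (mk_mem_boundary_iff.mp he).2 with ⟨hx, hy⟩ | ⟨hy, hx⟩
  exacts [hy (hx.trans hxy.reachable), hx (hy.trans hxy.symm.reachable)]

theorem card_filter_mem_boundary_le_two {ι : Type*} (s : Finset ι) {X : ι → Set V}
    (hX : (s : Set ι).PairwiseDisjoint X) (e : Sym2 V) :
    #{i ∈ s | e ∈ boundary G (X i)} ≤ 2 := by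
  induction e using Sym2.ind with | _ u v => ?_
  have hle_one : ∀ x, #{i ∈ s | x ∈ X i} ≤ 1 := fun x =>
    card_le_one.mpr fun i hi j hj => by_contra fun hij =>
      Set.disjoint_left.mp (hX (mem_filter.mp hi).1 (mem_filter.mp hj).1 hij)
        (mem_filter.mp hi).2 (mem_filter.mp hj).2
  calc #{i ∈ s | s(u, v) ∈ boundary G (X i)}
      ≤ #({i ∈ s | u ∈ X i} ∪ {i ∈ s | v ∈ X i}) := by
        refine card_le_card fun i hi => ?_
        simp only [mem_filter, mem_union, mk_mem_boundary_iff] at hi ⊢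
        tauto
    _ ≤ 2 := (card_union_le _ _).trans (by linarith [hle_one u, hle_one v])

end boundary

namespace SimpleGraph

open Finset

variable {V : Type*} {G : SimpleGraph V}

theorem Walk.reachable_deleteEdges_or {u v : V} (p : G.Walk u v) (a b : V) :
    (G.deleteEdges {s(a, b)}).Reachable u v ∨
      (G.deleteEdges {s(a, b)}).Reachable u a ∧ (G.deleteEdges {s(a, b)}).Reachable b v ∨
      (G.deleteEdges {s(a, b)}).Reachable u b ∧ (G.deleteEdges {s(a, b)}).Reachable a v := by
  induction p with
  | nil => exact Or.inl .rfl
  | @cons x z v hxz p ih =>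
    by_cases he : s(x, z) = s(a, b)
    · have := Reachable.refl (G := G.deleteEdges {s(a, b)}) a
      have := Reachable.refl (G := G.deleteEdges {s(a, b)}) b
      rcases Sym2.eq_iff.mp he with ⟨rfl, rfl⟩ | ⟨rfl, rfl⟩ <;> tauto
    · have hxz' : (G.deleteEdges {s(a, b)}).Adj x z := deleteEdges_adj.mpr ⟨hxz, he⟩
      rcases ih with h | ⟨h, h'⟩ | ⟨h, h'⟩
      exacts [Or.inl (hxz'.reachable.trans h), Or.inr (Or.inl ⟨hxz'.reachable.trans h, h'⟩),
        Or.inr (Or.inr ⟨hxz'.reachable.trans h, h'⟩)]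

theorem Connected.reachable_deleteEdges_or (hG : G.Connected) (a b v : V) :
    (G.deleteEdges {s(a, b)}).Reachable a v ∨ (G.deleteEdges {s(a, b)}).Reachable b v := by
  obtain ⟨p⟩ := hG.preconnected a v
  rcases p.reachable_deleteEdges_or a b with h | ⟨-, h⟩ | ⟨-, h⟩
  exacts [Or.inl h, Or.inr h, Or.inl h]

theorem IsAcyclic.not_reachable_deleteEdges_of_mem_edges (hG : G.IsAcyclic) {u v : V}
    {p : G.Walk u v} (hp : p.IsPath) {e : Sym2 V} (he : e ∈ p.edges) :
    ¬(G.deleteEdges {e}).Reachable u v := by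
  rintro ⟨q⟩
  have hpq : p = q.toPath.1.mapLe (deleteEdges_le _) := congrArg Subtype.val <|
    (hG.subsingleton_path u v).elim ⟨p, hp⟩ ⟨_, q.toPath.2.mapLe _⟩
  rw [hpq, Walk.edges_mapLe_eq_edges] at he
  simpa [edgeSet_deleteEdges] using Walk.edges_subset_edgeSet _ he

theorem Connected.card_le_card_add_one_of_pairwise_not_reachable (hG : G.Connected)
    (F : Finset (Sym2 V)) {X : Finset V}
    (hX : (X : Set V).Pairwise fun u v => ¬(G.deleteEdges ↑F).Reachable u v) :
    #X ≤ #F + 1 := by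
  induction F using Finset.induction_on generalizing X with
  | empty =>
    refine (card_le_one.mpr fun u hu v hv => by_contra fun huv => ?_).trans le_add_self
    exact hX hu hv huv (by simpa using hG.preconnected u v)
  | insert e F he ih =>
    induction e using Sym2.ind with | _ a b => ?_
    set R := (G.deleteEdges ↑(insert s(a, b) F)).Reachable
    have hdel : G.deleteEdges ↑(insert s(a, b) F) = (G.deleteEdges ↑F).deleteEdges {s(a, b)} := by
      rw [deleteEdges_deleteEdges, coe_insert, Set.insert_eq, Set.union_comm]
    have hnear : #{x ∈ X | R a x} ≤ 1 := card_le_one.mpr fun x hx y hy =>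
      by_contra fun hxy => hX (mem_filter.mp hx).1 (mem_filter.mp hy).1 hxy
        ((mem_filter.mp hx).2.symm.trans (mem_filter.mp hy).2)
    have hfar : #{x ∈ X | ¬R a x} ≤ #F + 1 := by
      refine ih fun x hx y hy hxy ⟨p⟩ => ?_
      simp only [coe_filter] at hx hy
      rcases p.reachable_deleteEdges_or a b with h | ⟨h, -⟩ | ⟨-, h⟩ <;> rw [← hdel] at h
      exacts [hX hx.1 hy.1 hxy h, hx.2 h.symm, hy.2 h]
    rw [card_insert_of_notMem he, ← card_filter_add_card_filter_not (fun x => R a x)]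
    omega

theorem pairwise_not_reachable_deleteEdges_union {S : Finset V} (P : V → Prop) [DecidablePred P]
    {F₀ F₁ F₂ : Set (Sym2 V)}
    (h₀ : ∀ x ∈ S, ∀ y ∈ S, P x → ¬P y → ¬(G.deleteEdges F₀).Reachable x y)
    (h₁ : (↑{x ∈ S | P x} : Set V).Pairwise fun x y => ¬(G.deleteEdges F₁).Reachable x y)
    (h₂ : (↑{x ∈ S | ¬P x} : Set V).Pairwise fun x y => ¬(G.deleteEdges F₂).Reachable x y) :
    (S : Set V).Pairwise fun x y => ¬(G.deleteEdges (F₀ ∪ F₁ ∪ F₂)).Reachable x y := by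
  intro x (hx : x ∈ S) y (hy : y ∈ S) hxy hreach
  have reach_of_subset {F : Set (Sym2 V)} (hF : F ⊆ F₀ ∪ F₁ ∪ F₂) :
      (G.deleteEdges F).Reachable x y := hreach.mono (deleteEdges_anti hF)
  by_cases hPx : P x <;> by_cases hPy : P y
  · exact h₁ (by simp [hx, hPx]) (by simp [hy, hPy]) hxy (reach_of_subset (by grind))
  · exact h₀ x hx y hy hPx hPy (reach_of_subset (by grind))
  · exact h₀ y hy x hx hPy hPx (reach_of_subset (by grind)).symm
  · exact h₂ (by simp [hx, hPx]) (by simp [hy, hPy]) hxy (reach_of_subset (by grind))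

theorem Walk.exists_mem_edges_le_and_le {u v : V} {p : G.Walk u v} {w : Sym2 V → ℝ} {c₁ c₂ : ℝ}
    (h₁ : ∃ e ∈ p.edges, w e ≤ c₁) (h₂ : ∃ e ∈ p.edges, w e ≤ c₂) :
    ∃ e ∈ p.edges, w e ≤ c₁ ∧ w e ≤ c₂ := by
  obtain ⟨e₁, he₁, hw₁⟩ := h₁
  obtain ⟨e₂, he₂, hw₂⟩ := h₂
  rcases le_total (w e₁) (w e₂) with h | h
  exacts [⟨e₁, he₁, hw₁, h.trans hw₂⟩, ⟨e₂, he₂, h.trans hw₁, hw₂⟩]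

theorem IsTree.exists_separating_edges_sum_add_le (hG : G.IsTree) {w : Sym2 V → ℝ}
    (hw : ∀ e ∈ G.edgeSet, 0 ≤ w e) (b : V → ℝ) (S : Finset V)
    (hS : ∀ x ∈ S, ∀ y ∈ S, x ≠ y → ∀ p : G.Walk x y, p.IsPath → ∃ e ∈ p.edges, w e ≤ b x) :
    ∃ F : Finset (Sym2 V), ↑F ⊆ G.edgeSet ∧ #F ≤ #S - 1 ∧
      (S : Set V).Pairwise (fun x y => ¬(G.deleteEdges ↑F).Reachable x y) ∧
      ∀ m ∈ S, ∑ e ∈ F, w e + b m ≤ ∑ x ∈ S, b x := by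
  induction S using Finset.strongInduction with | H S ih => ?_
  rcases le_or_gt #S 1 with hS1 | hS1
  · refine ⟨∅, by simp, by simp, ?_, fun m hm => ?_⟩
    · exact fun x hx y hy hxy => absurd (card_le_one.mp hS1 x hx y hy) hxy
    · rw [eq_singleton_iff_unique_mem.mpr ⟨hm, fun x hx => card_le_one.mp hS1 x hx m hm⟩]
      simp
  obtain ⟨i, hi, j, hj, hij⟩ := one_lt_card.mp hS1
  obtain ⟨p, hp⟩ := hG.connected.exists_isPath i j
  obtain ⟨e, he, hei, hej⟩ := Walk.exists_mem_edges_le_and_le (hS i hi j hj hij p hp)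
    (by simpa using hS j hj i hi hij.symm p.reverse hp.reverse)
  set R := (G.deleteEdges {e}).Reachable
  have hRij : ¬R i j := hG.isAcyclic.not_reachable_deleteEdges_of_mem_edges hp he
  have ih_filter (P : V → Prop) [DecidablePred P] {x : V} (hx : x ∈ S) (hPx : ¬P x) :=
    ih {y ∈ S | P y} (filter_ssubset.mpr ⟨x, hx, hPx⟩) fun y hy z hz =>
      hS y (mem_filter.mp hy).1 z (mem_filter.mp hz).1
  obtain ⟨FA, hFA, hcardA, hsepA, hsumA⟩ := ih_filter (R i) hj hRij
  obtain ⟨FB, hFB, hcardB, hsepB, hsumB⟩ := ih_filter (¬R i ·) hi (not_not.mpr .rfl)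
  refine ⟨insert e (FA ∪ FB), ?_, ?_, ?_, fun m hm => ?_⟩
  · simpa [Set.insert_subset_iff] using ⟨p.edges_subset_edgeSet he, hFA, hFB⟩
  · have hA : 0 < #{x ∈ S | R i x} := card_pos.mpr ⟨i, by simp [hi, R]⟩
    have hB : 0 < #{x ∈ S | ¬R i x} := card_pos.mpr ⟨j, by simp [hj, hRij]⟩
    have := card_filter_add_card_filter_not (s := S) (fun x => R i x)
    have := card_union_le FA FB
    have := card_insert_le e (FA ∪ FB)
    omega
  · have hsep := pairwise_not_reachable_deleteEdges_union (R i)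
      (fun x _ y _ hx hy hxy => hy (hx.trans hxy)) hsepA hsepB
    rwa [coe_insert, coe_union, Set.insert_eq, ← Set.union_assoc]
  · have hsum : ∑ e ∈ insert e (FA ∪ FB), w e ≤ w e + (∑ e ∈ FA, w e + ∑ e ∈ FB, w e) := by
      rw [insert_eq]
      refine (sum_union_le_add fun x hx => ?_).trans ?_
      · rw [mem_singleton.mp (mem_inter.mp hx).1]
        exact hw e (p.edges_subset_edgeSet he)
      · rw [sum_singleton]
        exact add_le_add_right (sum_union_le_add fun x hx => hw x (hFA (mem_inter.mp hx).1)) _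
    have := sum_filter_add_sum_filter_not S (fun x => R i x) b
    -- `e` is paid for by `b j` when `m` is on the side of `i`, and by `b i` otherwise
    by_cases hm' : R i m
    · have := hsumA m (by simp [hm, hm'])
      have := hsumB j (by simp [hj, hRij])
      linarith
    · have := hsumA i (by simp [hi, R])
      have := hsumB m (by simp [hm, hm'])
      linarith

end SimpleGraph

section

open Finset SimpleGraph

variable {V : Type*} [Fintype V] [DecidableEq V]

theorem not_reachable_deleteEdges_biUnion {G H : SimpleGraph V} (hH : H.IsTree)
    {U : Sym2 V → Finset (Sym2 V)}
    (hU : ∀ a b : V, H.Adj a b →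
      U s(a, b) = boundary G {v | (H.deleteEdges {s(a, b)}).Reachable a v})
    {F : Finset (Sym2 V)} (hF : ↑F ⊆ H.edgeSet) {u v : V}
    (huv : ¬(H.deleteEdges ↑F).Reachable u v) :
    ¬(G.deleteEdges ↑(F.biUnion U)).Reachable u v := by
  obtain ⟨p, hp⟩ := hH.connected.exists_isPath u v
  obtain ⟨e, heF, hep⟩ := p.exists_mem_edges_of_not_reachable_deleteEdges huv
  induction e using Sym2.ind with | _ a c => ?_
  have hsep := hH.isAcyclic.not_reachable_deleteEdges_of_mem_edges hp hep
  refine fun hreach => ?_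
  replace hreach : (G.deleteEdges ↑(U s(a, c))).Reachable u v :=
    hreach.mono (deleteEdges_anti (coe_subset.mpr (subset_biUnion_of_mem U heF)))
  rw [hU a c (hF heF)] at hreach
  set S : Set V := {x | (H.deleteEdges {s(a, c)}).Reachable a x}
  have hside (x : V) := hH.connected.reachable_deleteEdges_or a c x
  by_cases hau : (H.deleteEdges {s(a, c)}).Reachable a u
  · exact not_reachable_deleteEdges_boundary (S := S) hau
      (fun hav => hsep (hau.symm.trans hav)) hreach
  · have hcu := (hside u).resolve_left hau
    have hav := (hside v).resolve_right fun hcv => hsep (hcu.symm.trans hcv)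
    exact not_reachable_deleteEdges_boundary (S := S) hav hau hreach.symm

theorem exists_separating_treeEdges_sum_le {G H : SimpleGraph V} (hH : H.IsTree)
    {w wH : Sym2 V → ℝ} (hw : ∀ e, 0 ≤ w e) (hwH : ∀ e ∈ H.edgeSet, 0 ≤ wH e)
    (hGHpath : ∀ u v : V, ∀ p : H.Walk u v, p.IsPath →
      ∀ D : Finset (Sym2 V), ↑D ⊆ G.edgeSet →
        ¬ (G.deleteEdges (↑D : Set (Sym2 V))).Reachable u v →
        ∃ e ∈ p.edges, wH e ≤ ∑ e' ∈ D, w e')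
    {q : ℕ} (hq : 1 ≤ q) (t : Fin q → V) (C : Finset (Sym2 V))
    (hsep : ∀ i j, i ≠ j → ¬(G.deleteEdges ↑C).Reachable (t i) (t j)) :
    ∃ F : Finset (Sym2 V), ↑F ⊆ H.edgeSet ∧ #F = q - 1 ∧
      (∀ i j, i ≠ j → ¬(H.deleteEdges ↑F).Reachable (t i) (t j)) ∧
      ∑ e ∈ F, wH e ≤ (2 - 2 / (q : ℝ)) * ∑ e ∈ C, w e := by
  set comp : V → Set V := fun x => {y | (G.deleteEdges ↑C).Reachable x y}
  set b : V → ℝ := fun x => ∑ e ∈ boundary G (comp x), w e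
  have ht : Function.Injective t := fun i j hij => by_contra fun hne => hsep i j hne (hij ▸ .rfl)
  set S := univ.image t
  have hcardS : #S = q := by simp [S, card_image_of_injective _ ht]
  have hSsep : (S : Set V).Pairwise fun x y => ¬(G.deleteEdges ↑C).Reachable x y := by
    simp only [S, coe_image, coe_univ, Set.image_univ]
    rintro _ ⟨i, rfl⟩ _ ⟨j, rfl⟩ hij
    exact hsep i j (ne_of_apply_ne t hij)
  obtain ⟨F, hFE, hFcard, hFsep, hFsum⟩ := hH.exists_separating_edges_sum_add_le hwH b S
    fun x hx y hy hxy p hp => hGHpath x y p hp _ boundary_subset_edgeSet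
      (not_reachable_deleteEdges_boundary .rfl (hSsep hx hy hxy))
  have hq_le : q ≤ #F + 1 := hcardS ▸
    hH.connected.card_le_card_add_one_of_pairwise_not_reachable F hFsep
  refine ⟨F, hFE, by omega, fun i j hij => hFsep (by simp [S]) (by simp [S]) (ht.ne hij), ?_⟩
  have hbS : ∑ x ∈ S, b x ≤ 2 * ∑ e ∈ C, w e := by
    refine sum_sum_le_mul_sum 2 (fun e _ => hw e) (fun x _ => boundary_reachable_subset C x)
      fun e _ => card_filter_mem_boundary_le_two S ?_ e
    exact fun x hx y hy hxy => Set.disjoint_left.mpr fun z hzx hzy =>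
      hSsep hx hy hxy (hzx.trans hzy.symm)
  have havg : q * ∑ e ∈ F, wH e + ∑ x ∈ S, b x ≤ q * ∑ x ∈ S, b x := by
    simpa [sum_add_distrib, hcardS] using sum_le_sum hFsum
  have hq' : (1 : ℝ) ≤ q := by exact_mod_cast hq
  refine le_of_mul_le_mul_left ?_ (by linarith : (0 : ℝ) < q)
  calc (q : ℝ) * ∑ e ∈ F, wH e ≤ (q - 1) * ∑ x ∈ S, b x := by linarith
    _ ≤ (q - 1) * (2 * ∑ e ∈ C, w e) := mul_le_mul_of_nonneg_left hbS (by linarith)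
    _ = q * ((2 - 2 / q) * ∑ e ∈ C, w e) := by field_simp

end

theorem stmt5_general {V : Type*} [Fintype V] [DecidableEq V] (G H : SimpleGraph V)
    (w wH : Sym2 V → ℝ) (hw : ∀ e, 0 ≤ w e) (hH : H.IsTree)
    (U : Sym2 V → Finset (Sym2 V))
    (hside : ∀ a b : V, H.Adj a b →
      U s(a, b) = boundary G {v | (H.deleteEdges {s(a, b)}).Reachable a v} ∧
      ∑ e ∈ U s(a, b), w e = wH s(a, b))
    (hGHpath : ∀ u v : V, ∀ p : H.Walk u v, p.IsPath →
      ∀ D : Finset (Sym2 V), ↑D ⊆ G.edgeSet →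
        ¬ (G.deleteEdges (↑D : Set (Sym2 V))).Reachable u v →
        ∃ e ∈ p.edges, wH e ≤ ∑ e' ∈ D, w e')
    (q : ℕ) (hq : 1 ≤ q) (T : Fin q → Set V)
    (F : Finset (Sym2 V)) (hFE : ↑F ⊆ H.edgeSet)
    (hFgood : ∃ t : Fin q → V, (∀ i, t i ∈ T i) ∧
      ∀ i j, i ≠ j → ¬ (H.deleteEdges ↑F).Reachable (t i) (t j))
    (hFmin : ∀ F' : Finset (Sym2 V), ↑F' ⊆ H.edgeSet → F'.card = q - 1 →
      (∃ t : Fin q → V, (∀ i, t i ∈ T i) ∧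
        ∀ i j, i ≠ j → ¬ (H.deleteEdges ↑F').Reachable (t i) (t j)) →
      ∑ e ∈ F, wH e ≤ ∑ e ∈ F', wH e) :
    (∃ t : Fin q → V, (∀ i, t i ∈ T i) ∧
      ∀ i j, i ≠ j → ¬ (G.deleteEdges ↑(F.biUnion U)).Reachable (t i) (t j)) ∧
    (∀ (t' : Fin q → V) (C : Finset (Sym2 V)), (∀ i, t' i ∈ T i) → ↑C ⊆ G.edgeSet →
      (∀ i j, i ≠ j → ¬ (G.deleteEdges ↑C).Reachable (t' i) (t' j)) →
      ∑ e ∈ F.biUnion U, w e ≤ (2 - 2 / (q : ℝ)) * ∑ e ∈ C, w e) := by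
  have hU : ∀ e ∈ H.edgeSet, ∑ x ∈ U e, w x = wH e := by
    intro e
    induction e using Sym2.ind with | _ a b => exact fun h => (hside a b h).2
  have hwH : ∀ e ∈ H.edgeSet, 0 ≤ wH e := fun e he =>
    hU e he ▸ Finset.sum_nonneg fun x _ => hw x
  refine ⟨?_, fun t' C ht' _ hsep => ?_⟩
  · obtain ⟨t, htT, htF⟩ := hFgood
    exact ⟨t, htT, fun i j hij =>
      not_reachable_deleteEdges_biUnion hH (fun a b h => (hside a b h).1) hFE (htF i j hij)⟩
  · obtain ⟨F', hF'E, hF'card, hF'sep, hF'sum⟩ :=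
      exists_separating_treeEdges_sum_le hH hw hwH hGHpath hq t' C hsep
    calc ∑ e ∈ F.biUnion U, w e ≤ ∑ e ∈ F, ∑ x ∈ U e, w x :=
          Finset.sum_biUnion_le_sum_sum F U hw
      _ = ∑ e ∈ F, wH e := Finset.sum_congr rfl fun e he => hU e (hFE he)
      _ ≤ ∑ e ∈ F', wH e := hFmin F' hF'E hF'card ⟨t', ht', hF'sep⟩
      _ ≤ _ := hF'sum

/-- The Gomory–Hu based greedy algorithm for Single-to-Single: let `H` be a
Gomory–Hu tree of `G` (each tree edge `s(a,b)` corresponds to the cut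
`U s(a,b)` of `G` given by the boundary of one side of `H - s(a,b)`, of weight
`wH s(a,b)`, and min cuts of `G` are witnessed on tree paths), and let `F` be a
minimum `wH`-weight good cut of size `q - 1` on `H` (the output of the tree
greedy). Then the union `⋃_{e ∈ F} U e` is a feasible Single-to-Single cut of
weight at most `(2 - 2/q)` times that of any feasible solution. -/
theorem stmt5 {V : Type*} [Fintype V] [DecidableEq V] (G H : SimpleGraph V)
    (w wH : Sym2 V → ℝ) (hw : ∀ e, 0 ≤ w e) (hH : H.IsTree)
    (U : Sym2 V → Finset (Sym2 V))
    (hside : ∀ a b : V, H.Adj a b →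
      U s(a, b) = boundary G {v | (H.deleteEdges {s(a, b)}).Reachable a v} ∧
      ∑ e ∈ U s(a, b), w e = wH s(a, b))
    (hGHpath : ∀ u v : V, ∀ p : H.Walk u v, p.IsPath →
      ∀ D : Finset (Sym2 V), ↑D ⊆ G.edgeSet →
        ¬ (G.deleteEdges (↑D : Set (Sym2 V))).Reachable u v →
        ∃ e ∈ p.edges, wH e ≤ ∑ e' ∈ D, w e')
    (q : ℕ) (hq : 1 ≤ q) (T : Fin q → Set V)
    (F : Finset (Sym2 V)) (hFE : ↑F ⊆ H.edgeSet) (hFcard : F.card = q - 1)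
    (hFgood : ∃ t : Fin q → V, (∀ i, t i ∈ T i) ∧
      ∀ i j, i ≠ j → ¬ (H.deleteEdges ↑F).Reachable (t i) (t j))
    (hFmin : ∀ F' : Finset (Sym2 V), ↑F' ⊆ H.edgeSet → F'.card = q - 1 →
      (∃ t : Fin q → V, (∀ i, t i ∈ T i) ∧
        ∀ i j, i ≠ j → ¬ (H.deleteEdges ↑F').Reachable (t i) (t j)) →
      ∑ e ∈ F, wH e ≤ ∑ e ∈ F', wH e) :
    (∃ t : Fin q → V, (∀ i, t i ∈ T i) ∧
      ∀ i j, i ≠ j → ¬ (G.deleteEdges ↑(F.biUnion U)).Reachable (t i) (t j)) ∧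
    (∀ (t' : Fin q → V) (C : Finset (Sym2 V)), (∀ i, t' i ∈ T i) → ↑C ⊆ G.edgeSet →
      (∀ i j, i ≠ j → ¬ (G.deleteEdges ↑C).Reachable (t' i) (t' j)) →
      ∑ e ∈ F.biUnion U, w e ≤ (2 - 2 / (q : ℝ)) * ∑ e ∈ C, w e) :=
  stmt5_general G H w wH hw hH U hside hGHpath q hq T F hFE hFgood hFmin
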